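/- The map j:ℕ→ℕ defined by j(n)=⌊φn⌋−1 if n∈R_{1,0}, j(n)=⌊(φ−1)n⌋+1 if n∈R_{1,1}, and j(n)=⌊φn⌋+1 if n∈R_{2,0}, is a well-defined bijection of ℕ onto itself, and its inverse is the map defined piecewise by j⁻¹(n)=⌊φn⌋ if n∈R_{2,0}∪R_{1,1}, j⁻¹(n)=⌊(φ−1)n⌋+1 if n∈R_{2,1}, and j⁻¹(n)=⌊(φ−1)n⌋ if n∈R_{3,0}. -/

import Mathlib

/-!
Write `b(n) = ⌊nφ²⌋ = a(n) + n` (`wb`) and `t = nφ - a(n) ∈ (0, 1)`. Using `φ² = φ + 1` one finds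
`a(a(n)) = b(n) - 1`, `a(b(n)) = a(n) + b(n)`, `⌊(φ - 1) a(n)⌋ = n - 1` and `⌊(φ - 1) b(n)⌋ = a(n)`.
The first two identify the five sets: `R_{1,0} = b(ℕ)`, `R_{1,1} = a(a(ℕ))`, `R_{2,0} = a(b(ℕ))`,
`R_{2,1} = b(a(ℕ))` and `R_{3,0} = b(b(ℕ))`. Since `a(ℕ)` and `b(ℕ)` partition `ℕ` (Rayleigh's
theorem) and `a`, `b` are injective, `ℕ = b(ℕ) ⊔ a(a(ℕ)) ⊔ a(b(ℕ)) = a(ℕ) ⊔ b(a(ℕ)) ⊔ b(b(ℕ))`, and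
`j` sends `b(m) ↦ b(a(m))`, `a(a(m)) ↦ a(m)`, `a(b(m)) ↦ b(b(m))`; the claimed inverse undoes each.
-/

/-- The golden ratio φ = (1 + √5)/2. -/
noncomputable def phi : ℝ := (1 + Real.sqrt 5) / 2

/-- The lower Wythoff sequence a(n) = ⌊nφ⌋. -/
noncomputable def wa (n : ℕ) : ℕ := ⌊(n : ℝ) * phi⌋₊

/-- f_{i,j}(n) = F(i+1)·a(n) + F(i)·n − j. -/
noncomputable def fij (i : ℕ) (j : ℤ) (n : ℕ) : ℤ :=
  (Nat.fib (i + 1) : ℤ) * wa n + (Nat.fib i : ℤ) * n - j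

/-- R_{i,j} = { f_{i,j}(n) : n ∈ ℕ, n ≥ 1 }. -/
def R (i : ℕ) (j : ℤ) : Set ℤ := {m | ∃ n : ℕ, 0 < n ∧ fij i j n = m}

open scoped Classical in
/-- j(n) = ⌊φn⌋−1 if n ∈ R_{1,0}, ⌊(φ−1)n⌋+1 if n ∈ R_{1,1}, ⌊φn⌋+1 if n ∈ R_{2,0}. -/
noncomputable def jmap (n : ℕ) : ℕ :=
  if (n : ℤ) ∈ R 1 0 then wa n - 1
  else if (n : ℤ) ∈ R 1 1 then ⌊(phi - 1) * (n : ℝ)⌋₊ + 1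
  else wa n + 1

open scoped Classical in
/-- The claimed inverse: ⌊φn⌋ if n ∈ R_{2,0} ∪ R_{1,1}, ⌊(φ−1)n⌋+1 if n ∈ R_{2,1},
⌊(φ−1)n⌋ if n ∈ R_{3,0}. -/
noncomputable def jinv (n : ℕ) : ℕ :=
  if (n : ℤ) ∈ R 2 0 ∪ R 1 1 then wa n
  else if (n : ℤ) ∈ R 2 1 then ⌊(phi - 1) * (n : ℝ)⌋₊ + 1
  else ⌊(phi - 1) * (n : ℝ)⌋₊

lemma one_lt_phi : 1 < phi := Real.one_lt_goldenRatio

lemma phi_pos : 0 < phi := Real.goldenRatio_pos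

lemma phi_lt_two : phi < 2 := Real.goldenRatio_lt_two

lemma phi_sq : phi ^ 2 = phi + 1 := Real.goldenRatio_sq

lemma irrational_phi : Irrational phi := Real.goldenRatio_irrational

lemma natCast_mul_phi_nonneg (n : ℕ) : 0 ≤ (n : ℝ) * phi := mul_nonneg n.cast_nonneg phi_pos.le

lemma holderConjugate_phi_phi_sq : phi.HolderConjugate (phi ^ 2) := by
  rw [Real.holderConjugate_iff, phi_sq]
  refine ⟨one_lt_phi, ?_⟩
  field_simp [phi_pos.ne', (add_pos phi_pos one_pos).ne']
  linarith [phi_sq]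

noncomputable def wb (n : ℕ) : ℕ := ⌊(n : ℝ) * phi ^ 2⌋₊

lemma wb_eq_wa_add (n : ℕ) : wb n = wa n + n := by
  rw [wb, wa, phi_sq, mul_add, mul_one, Nat.floor_add_natCast (natCast_mul_phi_nonneg n)]

lemma natCast_mem_beattySeq_pos_iff {r : ℝ} (hr : 0 ≤ r) (n : ℕ) :
    (n : ℤ) ∈ {beattySeq r k | k > 0} ↔ ∃ m : ℕ, 0 < m ∧ ⌊(m : ℝ) * r⌋₊ = n := by
  constructor
  · rintro ⟨k, hk, hkn⟩
    lift k to ℕ using hk.le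
    refine ⟨k, by exact_mod_cast hk, ?_⟩
    rw [beattySeq, Int.cast_natCast, ← Int.natCast_floor_eq_floor (by positivity)] at hkn
    exact_mod_cast hkn
  · rintro ⟨m, hm, rfl⟩
    refine ⟨m, by exact_mod_cast hm, ?_⟩
    rw [beattySeq, Int.cast_natCast, Int.natCast_floor_eq_floor (by positivity)]

theorem xor_exists_wa_eq_exists_wb_eq {n : ℕ} (hn : 0 < n) :
    Xor (∃ m, 0 < m ∧ wa m = n) (∃ m, 0 < m ∧ wb m = n) := by
  have h := Set.ext_iff.1
    (irrational_phi.beattySeq_symmDiff_beattySeq_pos holderConjugate_phi_phi_sq) n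
  rw [Set.mem_symmDiff, natCast_mem_beattySeq_pos_iff phi_pos.le,
    natCast_mem_beattySeq_pos_iff (by positivity)] at h
  exact h.2 (Int.natCast_pos.2 hn)

lemma exists_wa_eq_or_exists_wb_eq {n : ℕ} (hn : 0 < n) :
    (∃ m, 0 < m ∧ wa m = n) ∨ ∃ m, 0 < m ∧ wb m = n :=
  (xor_exists_wa_eq_exists_wb_eq hn).or

lemma wa_pos {n : ℕ} (hn : 0 < n) : 0 < wa n := by
  have : (1 : ℝ) ≤ n := by exact_mod_cast hn
  exact Nat.floor_pos.2 (by nlinarith [one_lt_phi])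

lemma wb_pos {n : ℕ} (hn : 0 < n) : 0 < wb n := by
  rw [wb_eq_wa_add]; omega

lemma wa_ne_wb {m k : ℕ} (hm : 0 < m) (hk : 0 < k) : wa m ≠ wb k := fun h =>
  (xor_exists_wa_eq_exists_wb_eq (wa_pos hm)).elim (fun h' => h'.2 ⟨k, hk, h.symm⟩)
    fun h' => h'.2 ⟨m, hm, rfl⟩

lemma wa_strictMono : StrictMono wa := by
  refine strictMono_nat_of_lt_succ fun n => ?_
  have h : (n : ℝ) * phi + 1 ≤ ((n + 1 : ℕ) : ℝ) * phi := by
    push_cast; linarith [one_lt_phi]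
  calc wa n < ⌊(n : ℝ) * phi + 1⌋₊ := by
        rw [Nat.floor_add_one (natCast_mul_phi_nonneg n)]; exact Nat.lt_succ_self _
    _ ≤ wa (n + 1) := Nat.floor_mono h

lemma wb_strictMono : StrictMono wb := by
  intro m k h
  simp only [wb_eq_wa_add]
  have := wa_strictMono h
  omega

lemma wa_le_mul_phi (n : ℕ) : (wa n : ℝ) ≤ n * phi := Nat.floor_le (natCast_mul_phi_nonneg n)

lemma wa_lt_mul_phi {n : ℕ} (hn : 0 < n) : (wa n : ℝ) < n * phi := by
  refine (wa_le_mul_phi n).lt_of_ne fun h => ?_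
  exact (irrational_phi.natCast_mul hn.ne').ne_nat (wa n) (by rw [h, mul_comm])

lemma mul_phi_sub_one_lt_wa (n : ℕ) : (n : ℝ) * phi - 1 < wa n := by
  have := Nat.lt_floor_add_one ((n : ℝ) * phi)
  rw [← wa] at this
  linarith

lemma natCast_mul_phi_sq (n : ℕ) : (n : ℝ) * phi ^ 2 = n * phi + n := by rw [phi_sq]; ring

-- With `t = nφ - a(n)`, the floors below are taken of `a(n) + n + 1 - (φ - 1) t`,
-- `2 a(n) + n + (2 - φ) t`, `n + 1 - (φ - 1) t` and `a(n) + (2 - φ) t` respectively.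
lemma wa_wa_add_one {n : ℕ} (hn : 0 < n) : wa (wa n) + 1 = wb n := by
  have h₁ := mul_pos (sub_pos.2 (wa_lt_mul_phi hn)) (sub_pos.2 one_lt_phi)
  have h₂ := mul_pos (sub_pos.2 (mul_phi_sub_one_lt_wa n)) (sub_pos.2 one_lt_phi)
  have := natCast_mul_phi_sq n
  rw [wa, ← Nat.floor_add_one (natCast_mul_phi_nonneg (wa n)), wb_eq_wa_add]
  refine Nat.floor_eq_on_Ico _ _ ⟨?_, ?_⟩ <;> push_cast <;> linarith [one_lt_phi, phi_lt_two]

lemma wa_wb (n : ℕ) : wa (wb n) = wa n + wb n := by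
  have h₁ := mul_nonneg (sub_nonneg.2 (wa_le_mul_phi n)) (sub_pos.2 phi_lt_two).le
  have h₂ := mul_pos (sub_pos.2 (mul_phi_sub_one_lt_wa n)) (sub_pos.2 phi_lt_two)
  have := natCast_mul_phi_sq n
  rw [wa, wb_eq_wa_add]
  refine Nat.floor_eq_on_Ico _ _ ⟨?_, ?_⟩ <;> push_cast <;> linarith [one_lt_phi, phi_lt_two]

lemma floor_phi_sub_one_mul_wa_add_one {n : ℕ} (hn : 0 < n) :
    ⌊(phi - 1) * wa n⌋₊ + 1 = n := by
  have h₁ := mul_pos (sub_pos.2 (wa_lt_mul_phi hn)) (sub_pos.2 one_lt_phi)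
  have h₂ := mul_pos (sub_pos.2 (mul_phi_sub_one_lt_wa n)) (sub_pos.2 one_lt_phi)
  have := natCast_mul_phi_sq n
  rw [← Nat.floor_add_one (mul_nonneg (sub_pos.2 one_lt_phi).le (wa n).cast_nonneg)]
  refine Nat.floor_eq_on_Ico _ _ ⟨?_, ?_⟩ <;> linarith [one_lt_phi, phi_lt_two]

lemma floor_phi_sub_one_mul_wb (n : ℕ) : ⌊(phi - 1) * wb n⌋₊ = wa n := by
  have h₁ := mul_nonneg (sub_nonneg.2 (wa_le_mul_phi n)) (sub_pos.2 phi_lt_two).le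
  have h₂ := mul_pos (sub_pos.2 (mul_phi_sub_one_lt_wa n)) (sub_pos.2 phi_lt_two)
  have := natCast_mul_phi_sq n
  rw [wb_eq_wa_add]
  refine Nat.floor_eq_on_Ico _ _ ⟨?_, ?_⟩ <;> push_cast <;> linarith [one_lt_phi, phi_lt_two]

lemma fij_one_zero (m : ℕ) : fij 1 0 m = wb m := by
  have := wb_eq_wa_add m
  push_cast [fij, Nat.fib_add_two, Nat.fib_zero, Nat.fib_one]
  omega

lemma fij_one_one {m : ℕ} (hm : 0 < m) : fij 1 1 m = wa (wa m) := by
  have := wa_wa_add_one hm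
  have := wb_eq_wa_add m
  push_cast [fij, Nat.fib_add_two, Nat.fib_zero, Nat.fib_one]
  omega

lemma fij_two_zero (m : ℕ) : fij 2 0 m = wa (wb m) := by
  have := wa_wb m
  have := wb_eq_wa_add m
  push_cast [fij, Nat.fib_add_two, Nat.fib_zero, Nat.fib_one]
  omega

lemma fij_two_one {m : ℕ} (hm : 0 < m) : fij 2 1 m = wb (wa m) := by
  have := wa_wa_add_one hm
  have := wb_eq_wa_add m
  have := wb_eq_wa_add (wa m)
  push_cast [fij, Nat.fib_add_two, Nat.fib_zero, Nat.fib_one]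
  omega

lemma natCast_mem_R_iff {i : ℕ} {j : ℤ} {g : ℕ → ℕ} (hg : ∀ m, 0 < m → fij i j m = g m)
    (n : ℕ) : (n : ℤ) ∈ R i j ↔ ∃ m, 0 < m ∧ g m = n :=
  exists_congr fun m => and_congr_right fun hm => by rw [hg m hm, Nat.cast_inj]

lemma natCast_mem_R_one_zero_iff (n : ℕ) : (n : ℤ) ∈ R 1 0 ↔ ∃ m, 0 < m ∧ wb m = n :=
  natCast_mem_R_iff (fun m _ => fij_one_zero m) n

lemma natCast_mem_R_one_one_iff (n : ℕ) : (n : ℤ) ∈ R 1 1 ↔ ∃ m, 0 < m ∧ wa (wa m) = n :=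
  natCast_mem_R_iff (fun _ hm => fij_one_one hm) n

lemma natCast_mem_R_two_zero_iff (n : ℕ) : (n : ℤ) ∈ R 2 0 ↔ ∃ m, 0 < m ∧ wa (wb m) = n :=
  natCast_mem_R_iff (fun m _ => fij_two_zero m) n

lemma natCast_mem_R_two_one_iff (n : ℕ) : (n : ℤ) ∈ R 2 1 ↔ ∃ m, 0 < m ∧ wb (wa m) = n :=
  natCast_mem_R_iff (fun _ hm => fij_two_one hm) n

lemma natCast_mem_R_two_zero_union_R_one_one_iff (n : ℕ) :
    (n : ℤ) ∈ R 2 0 ∪ R 1 1 ↔ ∃ m, 0 < m ∧ wa m = n := by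
  rw [Set.mem_union, natCast_mem_R_two_zero_iff, natCast_mem_R_one_one_iff]
  constructor
  · rintro (⟨m, hm, rfl⟩ | ⟨m, hm, rfl⟩)
    exacts [⟨_, wb_pos hm, rfl⟩, ⟨_, wa_pos hm, rfl⟩]
  · rintro ⟨k, hk, rfl⟩
    obtain ⟨m, hm, rfl⟩ | ⟨m, hm, rfl⟩ := exists_wa_eq_or_exists_wb_eq hk
    exacts [.inr ⟨m, hm, rfl⟩, .inl ⟨m, hm, rfl⟩]

lemma exists_wb_or_wa_wa_or_wa_wb_eq {n : ℕ} (hn : 0 < n) :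
    ∃ m, 0 < m ∧ (wb m = n ∨ wa (wa m) = n ∨ wa (wb m) = n) := by
  obtain ⟨k, hk, rfl⟩ | ⟨m, hm, rfl⟩ := exists_wa_eq_or_exists_wb_eq hn
  · obtain ⟨m, hm, rfl⟩ | ⟨m, hm, rfl⟩ := exists_wa_eq_or_exists_wb_eq hk
    exacts [⟨m, hm, .inr (.inl rfl)⟩, ⟨m, hm, .inr (.inr rfl)⟩]
  · exact ⟨m, hm, .inl rfl⟩

lemma exists_wa_or_wb_wa_or_wb_wb_eq {n : ℕ} (hn : 0 < n) :
    ∃ m, 0 < m ∧ (wa m = n ∨ wb (wa m) = n ∨ wb (wb m) = n) := by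
  obtain ⟨m, hm, rfl⟩ | ⟨k, hk, rfl⟩ := exists_wa_eq_or_exists_wb_eq hn
  · exact ⟨m, hm, .inl rfl⟩
  · obtain ⟨m, hm, rfl⟩ | ⟨m, hm, rfl⟩ := exists_wa_eq_or_exists_wb_eq hk
    exacts [⟨m, hm, .inr (.inl rfl)⟩, ⟨m, hm, .inr (.inr rfl)⟩]

lemma jmap_wb {m : ℕ} (hm : 0 < m) : jmap (wb m) = wb (wa m) := by
  have h₁ := wa_wb m
  have h₂ := wa_wa_add_one hm
  have h₃ := wb_eq_wa_add (wa m)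
  rw [jmap, if_pos ((natCast_mem_R_one_zero_iff _).2 ⟨m, hm, rfl⟩)]
  omega

lemma jmap_wa_wa {m : ℕ} (hm : 0 < m) : jmap (wa (wa m)) = wa m := by
  have hB : (wa (wa m) : ℤ) ∉ R 1 0 := by
    rw [natCast_mem_R_one_zero_iff]
    rintro ⟨k, hk, h⟩
    exact wa_ne_wb (wa_pos hm) hk h.symm
  rw [jmap, if_neg hB, if_pos ((natCast_mem_R_one_one_iff _).2 ⟨m, hm, rfl⟩),
    floor_phi_sub_one_mul_wa_add_one (wa_pos hm)]

lemma jmap_wa_wb {m : ℕ} (hm : 0 < m) : jmap (wa (wb m)) = wb (wb m) := by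
  have hB : (wa (wb m) : ℤ) ∉ R 1 0 := by
    rw [natCast_mem_R_one_zero_iff]
    rintro ⟨k, hk, h⟩
    exact wa_ne_wb (wb_pos hm) hk h.symm
  have hAA : (wa (wb m) : ℤ) ∉ R 1 1 := by
    rw [natCast_mem_R_one_one_iff]
    rintro ⟨k, hk, h⟩
    exact wa_ne_wb hk hm (wa_strictMono.injective h)
  rw [jmap, if_neg hB, if_neg hAA, wa_wa_add_one (wb_pos hm)]

lemma jinv_wa {m : ℕ} (hm : 0 < m) : jinv (wa m) = wa (wa m) := by
  rw [jinv, if_pos ((natCast_mem_R_two_zero_union_R_one_one_iff _).2 ⟨m, hm, rfl⟩)]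

lemma jinv_wb_wa {m : ℕ} (hm : 0 < m) : jinv (wb (wa m)) = wb m := by
  have hA : (wb (wa m) : ℤ) ∉ R 2 0 ∪ R 1 1 := by
    rw [natCast_mem_R_two_zero_union_R_one_one_iff]
    rintro ⟨k, hk, h⟩
    exact wa_ne_wb hk (wa_pos hm) h
  rw [jinv, if_neg hA, if_pos ((natCast_mem_R_two_one_iff _).2 ⟨m, hm, rfl⟩),
    floor_phi_sub_one_mul_wb, wa_wa_add_one hm]

lemma jinv_wb_wb {m : ℕ} (hm : 0 < m) : jinv (wb (wb m)) = wa (wb m) := by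
  have hA : (wb (wb m) : ℤ) ∉ R 2 0 ∪ R 1 1 := by
    rw [natCast_mem_R_two_zero_union_R_one_one_iff]
    rintro ⟨k, hk, h⟩
    exact wa_ne_wb hk (wb_pos hm) h
  have hBA : (wb (wb m) : ℤ) ∉ R 2 1 := by
    rw [natCast_mem_R_two_one_iff]
    rintro ⟨k, hk, h⟩
    exact wa_ne_wb hk hm (wb_strictMono.injective h)
  rw [jinv, if_neg hA, if_neg hBA, floor_phi_sub_one_mul_wb]

lemma jinv_jmap {n : ℕ} (hn : 0 < n) : jinv (jmap n) = n := by
  obtain ⟨m, hm, rfl | rfl | rfl⟩ := exists_wb_or_wa_wa_or_wa_wb_eq hn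
  · rw [jmap_wb hm, jinv_wb_wa hm]
  · rw [jmap_wa_wa hm, jinv_wa hm]
  · rw [jmap_wa_wb hm, jinv_wb_wb hm]

lemma jmap_jinv {n : ℕ} (hn : 0 < n) : jmap (jinv n) = n := by
  obtain ⟨m, hm, rfl | rfl | rfl⟩ := exists_wa_or_wb_wa_or_wb_wb_eq hn
  · rw [jinv_wa hm, jmap_wa_wa hm]
  · rw [jinv_wb_wa hm, jmap_wb hm]
  · rw [jinv_wb_wb hm, jmap_wa_wb hm]

lemma jmap_pos {n : ℕ} (hn : 0 < n) : 0 < jmap n := by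
  obtain ⟨m, hm, rfl | rfl | rfl⟩ := exists_wb_or_wa_wa_or_wa_wb_eq hn
  · rw [jmap_wb hm]; exact wb_pos (wa_pos hm)
  · rw [jmap_wa_wa hm]; exact wa_pos hm
  · rw [jmap_wa_wb hm]; exact wb_pos (wb_pos hm)

lemma jinv_pos {n : ℕ} (hn : 0 < n) : 0 < jinv n := by
  obtain ⟨m, hm, rfl | rfl | rfl⟩ := exists_wa_or_wb_wa_or_wb_wb_eq hn
  · rw [jinv_wa hm]; exact wa_pos (wa_pos hm)
  · rw [jinv_wb_wa hm]; exact wb_pos hm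
  · rw [jinv_wb_wb hm]; exact wa_pos (wb_pos hm)

theorem stmt_11 :
    Set.BijOn jmap {n : ℕ | 0 < n} {n : ℕ | 0 < n} ∧
    (∀ n : ℕ, 0 < n → jinv (jmap n) = n) ∧
    (∀ n : ℕ, 0 < n → jmap (jinv n) = n) :=
  ⟨Set.InvOn.bijOn ⟨fun _ => jinv_jmap, fun _ => jmap_jinv⟩ (fun _ => jmap_pos) fun _ => jinv_pos,
    fun _ => jinv_jmap, fun _ => jmap_jinv⟩
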